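/- Let m, d, n be positive integers and let X₁,…,Xₙ ∈ {0,…,d−1} satisfy d ∣ ∑ₖ Xₖ. For Y = (Y₁,…,Yₙ) with each Yₖ ∈ {0,…,m−1}, define the outcome amplitude A(Y) = m^{−(n+1)/2} · ∑_{i=0}^{m−1} exp( 2πi · i · (∑ₖ Xₖ − d·∑ₖ Yₖ) / (m·d) ). Then ∑_Y |A(Y)|² = 1, where the sum runs over all Y ∈ {0,…,m−1}ⁿ; moreover the sum restricted to those Y with d·∑ₖ Yₖ ≡ ∑ₖ Xₖ (mod m·d) already equals 1. In particular, for each such winning outcome Y one has |A(Y)|² = m^{1−n}, and the number of winning outcomes is m^{n−1}. -/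

import Mathlib

/-- The outcome amplitude `A(Y) = m^{-(n+1)/2} ∑_{j=0}^{m-1} exp(2πi·j·(∑Xₖ - d∑Yₖ)/(md))`
of the sequential GHZ measurement in the modulo-(m,d) game. -/
noncomputable def ghzAmp (m d n : ℕ) (X : ℕ → ℕ) (Y : Fin n → Fin m) : ℂ :=
  (((m : ℝ) ^ (-(((n : ℝ) + 1) / 2)) : ℝ) : ℂ) *
    ∑ j ∈ Finset.range m,
      Complex.exp (2 * (Real.pi : ℂ) * Complex.I * (j : ℂ) *
        ((((∑ k ∈ Finset.range n, (X k : ℤ)) -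
            (d : ℤ) * ∑ k : Fin n, ((Y k : ℕ) : ℤ)) : ℤ) : ℂ) /
        ((m : ℂ) * (d : ℂ)))

/-- An outcome `Y` wins the modulo-(m,d) game if `d ∑ Yₖ ≡ ∑ Xₖ (mod m d)`. -/
def GhzWinning (m d n : ℕ) (X : ℕ → ℕ) (Y : Fin n → Fin m) : Prop :=
  ((d : ℤ) * ∑ k : Fin n, ((Y k : ℕ) : ℤ)) ≡
    (∑ k ∈ Finset.range n, (X k : ℤ)) [ZMOD ((m : ℤ) * d)]

instance (m d n : ℕ) (X : ℕ → ℕ) : DecidablePred (GhzWinning m d n X) := fun Y => by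
  unfold GhzWinning Int.ModEq
  infer_instance

/-!
Write `∑ Xₖ = d c`. The phase in `A(Y)` is then `2πi j (c - ∑ Yₖ) / m`, so `A(Y)` is
`m^{-(n+1)/2}` times a geometric sum of `m`-th roots of unity: it is `m^{(1-n)/2}` when
`m ∣ c - ∑ Yₖ`, i.e. when `Y` wins, and `0` otherwise. The winning outcomes are the `Y` whose
coordinates sum to `c` in `ZMod m`; there are `m^{n-1}` of them, since the first coordinate is
determined by the others, so their probabilities `m^{1-n}` add up to `1`.
-/

open Finset Complex Real

theorem Complex.sum_range_exp_two_pi_I_mul_div_eq_ite (m : ℕ) (hm : m ≠ 0) (T : ℤ) :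
    ∑ j ∈ range m, exp (2 * π * I * j * T / m) = if (m : ℤ) ∣ T then (m : ℂ) else 0 := by
  have hζ := isPrimitiveRoot_exp m hm
  have hterm (j : ℕ) : exp (2 * π * I * j * T / m) = (exp (2 * π * I / m) ^ T) ^ j := by
    rw [← zpow_natCast, ← zpow_mul, ← exp_int_mul]
    push_cast
    ring_nf
  simp_rw [hterm]
  split_ifs with hT
  · simp [(hζ.zpow_eq_one_iff_dvd T).2 hT]
  · have hω : exp (2 * π * I / m) ^ T ≠ 1 := mt (hζ.zpow_eq_one_iff_dvd T).1 hT
    have hωm : (exp (2 * π * I / m) ^ T) ^ m = 1 := by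
      rw [← zpow_natCast, ← zpow_mul, mul_comm T, zpow_mul, zpow_natCast, hζ.pow_eq_one,
        one_zpow]
    rw [geom_sum_eq hω, hωm, sub_self, zero_div]

theorem ZMod.finEquiv_apply_eq_natCast (m : ℕ) [NeZero m] (a : Fin m) :
    ZMod.finEquiv m a = ((a : ℕ) : ZMod m) := by
  obtain ⟨k, rfl⟩ := Nat.exists_eq_succ_of_ne_zero (NeZero.ne m)
  exact (Fin.cast_val_eq_self a).symm

theorem Fin.card_filter_sum_eq_pow {G : Type*} [AddCommGroup G] [Fintype G] [DecidableEq G]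
    (n : ℕ) (a : G) : #{f : Fin (n + 1) → G | ∑ i, f i = a} = Fintype.card G ^ n := by
  rw [← Fintype.card_fin n, ← Fintype.card_fun, Fintype.card_fin, ← card_univ]
  refine card_nbij' Fin.tail (fun t => Fin.cons (a - ∑ i, t i) t) ?_ ?_ ?_ ?_
  · simp
  · simp [Fin.sum_univ_succ]
  · intro f hf
    simp only [coe_filter, mem_univ, true_and] at hf
    subst hf
    simp [Fin.sum_univ_succ, Fin.tail]
  · exact fun t _ => Fin.tail_cons _ _

section GhzGame

variable {m d n : ℕ} {X : ℕ → ℕ} {c : ℤ}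

theorem ghzWinning_iff_dvd (hd : d ≠ 0) (hc : ∑ k ∈ range n, (X k : ℤ) = d * c)
    (Y : Fin n → Fin m) :
    GhzWinning m d n X Y ↔ (m : ℤ) ∣ c - ∑ k, ((Y k : ℕ) : ℤ) := by
  rw [GhzWinning, Int.modEq_iff_dvd, hc, ← mul_sub, mul_comm (m : ℤ)]
  exact mul_dvd_mul_iff_left (by exact_mod_cast hd)

theorem ghzWinning_iff_sum_zmod_eq (hd : d ≠ 0) (hc : ∑ k ∈ range n, (X k : ℤ) = d * c)
    (Y : Fin n → Fin m) : GhzWinning m d n X Y ↔ ∑ k, ((Y k : ℕ) : ZMod m) = c := by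
  rw [ghzWinning_iff_dvd hd hc, ← ZMod.intCast_eq_intCast_iff_dvd_sub]
  push_cast
  rfl

theorem ghzAmp_eq_ite (hm : m ≠ 0) (hd : d ≠ 0) (hc : ∑ k ∈ range n, (X k : ℤ) = d * c)
    (Y : Fin n → Fin m) :
    ghzAmp m d n X Y = if GhzWinning m d n X Y
      then (((m : ℝ) ^ (-(((n : ℝ) + 1) / 2)) : ℝ) : ℂ) * m else 0 := by
  have hphase (j : ℕ) : 2 * π * I * j * (((∑ k ∈ range n, (X k : ℤ)) -
      d * ∑ k, ((Y k : ℕ) : ℤ) : ℤ) : ℂ) / (m * d) =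
      2 * π * I * j * ((c - ∑ k, ((Y k : ℕ) : ℤ) : ℤ) : ℂ) / m := by
    rw [hc]
    push_cast
    field_simp
  simp_rw [ghzAmp, hphase, sum_range_exp_two_pi_I_mul_div_eq_ite m hm, ghzWinning_iff_dvd hd hc]
  split_ifs <;> simp

theorem norm_ghzAmp_sq (hm : m ≠ 0) (hd : d ≠ 0) (hc : ∑ k ∈ range n, (X k : ℤ) = d * c)
    (Y : Fin n → Fin m) : ‖ghzAmp m d n X Y‖ ^ 2 =
      if GhzWinning m d n X Y then (m : ℝ) ^ ((1 : ℤ) - n) else 0 := by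
  rw [ghzAmp_eq_ite hm hd hc]
  split_ifs
  · have hm' : (m : ℝ) ≠ 0 := by exact_mod_cast hm
    calc ‖(((m : ℝ) ^ (-(((n : ℝ) + 1) / 2)) : ℝ) : ℂ) * m‖ ^ 2
        = ((m : ℝ) ^ (-(((n : ℝ) + 1) / 2))) ^ 2 * (m : ℝ) ^ 2 := by
          rw [norm_mul, norm_real, Complex.norm_natCast, Real.norm_of_nonneg (by positivity),
            mul_pow]
      _ = (m : ℝ) ^ (-(((n : ℝ) + 1) / 2) * (2 : ℕ) + (2 : ℕ)) := by
          rw [Real.rpow_add_natCast hm', Real.rpow_mul_natCast (Nat.cast_nonneg m)]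
      _ = (m : ℝ) ^ ((1 : ℤ) - n) := by
          rw [← Real.rpow_intCast]
          push_cast
          ring_nf
  · simp

theorem card_ghzWinning (hm : m ≠ 0) (hd : d ≠ 0) (hn : n ≠ 0)
    (hc : ∑ k ∈ range n, (X k : ℤ) = d * c) :
    #{Y | GhzWinning m d n X Y} = m ^ (n - 1) := by
  have : NeZero m := ⟨hm⟩
  obtain ⟨n, rfl⟩ := Nat.exists_eq_succ_of_ne_zero hn
  calc #{Y | GhzWinning m d (n + 1) X Y}
      = #{f : Fin (n + 1) → ZMod m | ∑ k, f k = c} := by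
        refine card_nbij' (fun Y k => ZMod.finEquiv m (Y k))
          (fun f k => (ZMod.finEquiv m).symm (f k)) ?_ ?_ ?_ ?_
        · intro Y hY
          simpa [ZMod.finEquiv_apply_eq_natCast, ghzWinning_iff_sum_zmod_eq hd hc] using hY
        · intro f hf
          simpa [ghzWinning_iff_sum_zmod_eq hd hc, ← ZMod.finEquiv_apply_eq_natCast] using hf
        · exact fun Y _ => funext fun k => (ZMod.finEquiv m).symm_apply_apply (Y k)
        · exact fun f _ => funext fun k => (ZMod.finEquiv m).apply_symm_apply (f k)
    _ = m ^ (n + 1 - 1) := by rw [Fin.card_filter_sum_eq_pow, ZMod.card, Nat.add_sub_cancel]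

end GhzGame

theorem ghz_wins_with_certainty_general
    (m d n : ℕ) (hm : 0 < m) (hd : 0 < d) (hn : 0 < n)
    (X : ℕ → ℕ)
    (hprom : (d : ℤ) ∣ ∑ k ∈ Finset.range n, (X k : ℤ)) :
    (∑ Y : Fin n → Fin m, ‖ghzAmp m d n X Y‖ ^ 2 = 1) ∧
    (∑ Y ∈ Finset.univ.filter (GhzWinning m d n X),
        ‖ghzAmp m d n X Y‖ ^ 2 = 1) ∧
    (∀ Y : Fin n → Fin m, GhzWinning m d n X Y →
        ‖ghzAmp m d n X Y‖ ^ 2 = (m : ℝ) ^ ((1 : ℤ) - (n : ℤ))) ∧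
    (Finset.univ.filter (GhzWinning m d n X)).card = m ^ (n - 1) := by
  obtain ⟨c, hc⟩ := hprom
  have hprob : ∀ Y : Fin n → Fin m, ‖ghzAmp m d n X Y‖ ^ 2 =
      if GhzWinning m d n X Y then (m : ℝ) ^ ((1 : ℤ) - n) else 0 :=
    norm_ghzAmp_sq hm.ne' hd.ne' hc
  have hwin_prob (Y) (hY : GhzWinning m d n X Y) := (hprob Y).trans (if_pos hY)
  have hcard : #{Y | GhzWinning m d n X Y} = m ^ (n - 1) :=
    card_ghzWinning hm.ne' hd.ne' hn.ne' hc
  have hwin_total : ∑ Y ∈ univ.filter (GhzWinning m d n X), ‖ghzAmp m d n X Y‖ ^ 2 = 1 := by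
    rw [sum_congr rfl fun Y hY => hwin_prob Y (mem_filter.1 hY).2, sum_const, hcard,
      nsmul_eq_mul, Nat.cast_pow, ← zpow_natCast, ← zpow_add₀ (by positivity)]
    rw [show ((n - 1 : ℕ) : ℤ) + (1 - n) = 0 by omega, zpow_zero]
  refine ⟨?_, hwin_total, hwin_prob, hcard⟩
  rw [← hwin_total]
  exact (sum_filter_of_ne fun Y _ hY => by_contra fun hW => hY (by rw [hprob, if_neg hW])).symm

/-- **The GHZ strategy wins the modulo-(m,d) game with probability 1.**
The outcome amplitudes are normalized (`∑_Y |A(Y)|² = 1`), the winning outcomes alone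
carry the full probability, each winning outcome has probability `m^{1-n}`, and there
are exactly `m^{n-1}` winning outcomes. -/
theorem ghz_wins_with_certainty
    (m d n : ℕ) (hm : 0 < m) (hd : 0 < d) (hn : 0 < n)
    (X : ℕ → ℕ) (hX : ∀ k ∈ Finset.range n, X k ≤ d - 1)
    (hprom : (d : ℤ) ∣ ∑ k ∈ Finset.range n, (X k : ℤ)) :
    (∑ Y : Fin n → Fin m, ‖ghzAmp m d n X Y‖ ^ 2 = 1) ∧
    (∑ Y ∈ Finset.univ.filter (GhzWinning m d n X),
        ‖ghzAmp m d n X Y‖ ^ 2 = 1) ∧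
    (∀ Y : Fin n → Fin m, GhzWinning m d n X Y →
        ‖ghzAmp m d n X Y‖ ^ 2 = (m : ℝ) ^ ((1 : ℤ) - (n : ℤ))) ∧
    (Finset.univ.filter (GhzWinning m d n X)).card = m ^ (n - 1) :=
  ghz_wins_with_certainty_general m d n hm hd hn X hprom
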